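/- For a uniformly random word w with n occurrences each of letters 1, 2, 3 (n ≥ 1), the covariance of s_1(w) and s_2(w) equals −n³/3, and hence the correlation coefficient of s_1 and s_2 equals −n/(2n+1). -/

import Mathlib

/-!
Condition on the first letter. In a uniformly random rearrangement of a list `L` of length `N`
the first letter is `x` with probability `count x L / N`, and given that, the tail is a uniformly
random rearrangement of `L.erase x`; the probability comes from the multinomial count
`#(arrangements L) * ∏ y, (count y L)! = N!`.

Prepending `y` to a word raises `netInv x y` by its number of `x`'s, prepending `x` lowers it by
its number of `y`'s, and other letters leave it unchanged. So the first and second moments of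
these statistics satisfy a recursion in the letter counts, solved by induction on the length:
for letters occurring `a`, `b`, `c` times, `netInv x y` has mean `0` and variance `ab(a+b+1)/3`,
and `netInv x y`, `netInv y z` have covariance `-abc/3`. For `a = b = c = n` this gives the
covariance `-n³/3` and the correlation `-n/(2n+1)`.
-/

/-- Number of pairs of positions i < j with `w i = a` and `w j = b`. -/
def cnt (a b : ℕ) (w : List ℕ) : ℕ :=
  ((Finset.univ : Finset (Fin w.length × Fin w.length)).filter
    (fun p => p.1 < p.2 ∧ w.get p.1 = a ∧ w.get p.2 = b)).card

def s1 (w : List ℕ) : ℤ := (cnt 2 1 w : ℤ) - (cnt 1 2 w : ℤ)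
def s2 (w : List ℕ) : ℤ := (cnt 3 2 w : ℤ) - (cnt 2 3 w : ℤ)
def s3 (w : List ℕ) : ℤ := (cnt 1 3 w : ℤ) - (cnt 3 1 w : ℤ)

/-- The (finite) set of words in {1,2,3} with `a1` ones, `a2` twos and `a3` threes. -/
def W (a1 a2 a3 : ℕ) : Finset (List ℕ) :=
  (List.replicate a1 1 ++ List.replicate a2 2 ++ List.replicate a3 3).permutations.toFinset

/-- Expectation of `g` for a uniformly random word of `W n n n`. -/
noncomputable def E (n : ℕ) (g : List ℕ → ℝ) : ℝ :=
  (∑ w ∈ W n n n, g w) / ((W n n n).card : ℝ)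

/-- Covariance of two word statistics over `W n n n`. -/
noncomputable def Cov (n : ℕ) (g h : List ℕ → ℝ) : ℝ :=
  E n (fun w => (g w - E n g) * (h w - E n h))

open scoped BigOperators
open Finset

section Arrangements

variable {α : Type*} [DecidableEq α]

def arrangements (L : List α) : Finset (List α) := L.permutations.toFinset

@[simp]
lemma mem_arrangements {L w : List α} : w ∈ arrangements L ↔ w.Perm L := by
  simp [arrangements, List.mem_permutations]

lemma arrangements_nonempty (L : List α) : (arrangements L).Nonempty :=
  ⟨L, mem_arrangements.2 (List.Perm.refl L)⟩

lemma arrangements_nil : arrangements ([] : List α) = {[]} := by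
  ext w; simp

theorem List.induction_on_erase {P : List α → Prop} (nil : P [])
    (step : ∀ L, L ≠ [] → (∀ x ∈ L, P (L.erase x)) → P L) : ∀ L, P L
  | [] => nil
  | x :: L => step _ (List.cons_ne_nil x L) fun y hy =>
      have := List.length_erase_of_mem hy
      List.induction_on_erase nil step _
termination_by L => L.length
decreasing_by simp_all

lemma sum_arrangements {M : Type*} [AddCommMonoid M] (L : List α) (hL : L ≠ [])
    (f : List α → M) :
    ∑ w ∈ arrangements L, f w =
      ∑ x ∈ L.toFinset, ∑ w ∈ arrangements (L.erase x), f (x :: w) := by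
  rw [sum_sigma']
  refine sum_nbij' (fun w => ⟨w.headD (L.head hL), w.tail⟩) (fun p => p.1 :: p.2)
    ?_ ?_ ?_ ?_ ?_
  · rintro (_ | ⟨x, w⟩) h
    · simp_all
    · simpa using List.cons_perm_iff_perm_erase.1 (mem_arrangements.1 h)
  · rintro ⟨x, w⟩ h
    simp only [mem_sigma, List.mem_toFinset, mem_arrangements] at h ⊢
    exact List.cons_perm_iff_perm_erase.2 h
  · rintro (_ | ⟨x, w⟩) h
    · simp_all
    · rfl
  · rintro ⟨x, w⟩ _
    rfl
  · rintro (_ | ⟨x, w⟩) h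
    · simp_all
    · rfl

lemma prod_factorial_count_eq_count_mul_erase (L : List α) {x : α} (hx : x ∈ L) :
    ∏ y ∈ L.toFinset, (L.count y).factorial =
      L.count x * ∏ y ∈ (L.erase x).toFinset, ((L.erase x).count y).factorial := by
  have hsub : (L.erase x).toFinset ⊆ L.toFinset := fun y hy => by
    simpa using List.erase_subset (List.mem_toFinset.1 hy)
  rw [prod_subset hsub fun y _ hy => by
    rw [List.count_eq_zero_of_not_mem (by simpa using hy), Nat.factorial_zero]]
  have hxT : x ∈ L.toFinset := List.mem_toFinset.2 hx
  rw [← mul_prod_erase _ _ hxT, ← mul_prod_erase _ _ hxT, ← mul_assoc,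
    List.count_erase_self, ← Nat.mul_factorial_pred (List.count_pos_iff.2 hx).ne']
  congr 1
  refine prod_congr rfl fun y hy => ?_
  rw [List.count_erase_of_ne (ne_of_mem_erase hy)]

lemma card_arrangements_mul_prod_factorial (L : List α) :
    #(arrangements L) * ∏ y ∈ L.toFinset, (L.count y).factorial = L.length.factorial := by
  induction L using List.induction_on_erase with
  | nil => simp [arrangements_nil]
  | step L hL ih =>
    obtain ⟨n, hn⟩ : ∃ n, L.length = n + 1 :=
      Nat.exists_eq_succ_of_ne_zero (by simpa using hL)
    calc #(arrangements L) * ∏ y ∈ L.toFinset, (L.count y).factorial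
        = ∑ x ∈ L.toFinset, L.count x * n.factorial := by
          rw [card_eq_sum_ones, sum_arrangements L hL, sum_mul]
          refine sum_congr rfl fun x hx => ?_
          have hx := List.mem_toFinset.1 hx
          rw [prod_factorial_count_eq_count_mul_erase L hx, ← card_eq_sum_ones, mul_left_comm,
            ih x hx, List.length_erase_of_mem hx, hn, Nat.add_sub_cancel]
      _ = L.length.factorial := by
          rw [← sum_mul, List.sum_toFinset_count_eq_length, hn, Nat.factorial_succ]

lemma count_mul_card_arrangements (L : List α) {x : α} (hx : x ∈ L) :
    L.count x * #(arrangements L) = L.length * #(arrangements (L.erase x)) := by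
  obtain ⟨n, hn⟩ : ∃ n, L.length = n + 1 :=
    Nat.exists_eq_succ_of_ne_zero (by simpa using List.ne_nil_of_mem hx)
  have hL := card_arrangements_mul_prod_factorial L
  have hLx := card_arrangements_mul_prod_factorial (L.erase x)
  rw [prod_factorial_count_eq_count_mul_erase L hx, hn, Nat.factorial_succ] at hL
  rw [List.length_erase_of_mem hx, hn, Nat.add_sub_cancel] at hLx
  have hpos : 0 < ∏ y ∈ (L.erase x).toFinset, ((L.erase x).count y).factorial :=
    prod_pos fun y _ => Nat.factorial_pos _
  refine Nat.eq_of_mul_eq_mul_right hpos ?_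
  rw [hn, mul_assoc _ #(arrangements (L.erase x)), hLx, ← hL]
  ring

lemma length_mul_expect_arrangements {K : Type*} [Field K] [CharZero K] (L : List α)
    (f : List α → K) :
    (L.length : K) * 𝔼 w ∈ arrangements L, f w =
      ∑ x ∈ L.toFinset, (L.count x : K) * 𝔼 w ∈ arrangements (L.erase x), f (x :: w) := by
  rcases eq_or_ne L [] with rfl | hL
  · simp
  have hcard : ∀ M : List α, (#(arrangements M) : K) ≠ 0 := fun M =>
    Nat.cast_ne_zero.2 (arrangements_nonempty M).card_ne_zero
  simp only [expect_eq_sum_div_card, sum_arrangements L hL]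
  rw [mul_div_assoc', mul_sum, sum_div]
  refine sum_congr rfl fun x hx => ?_
  have hratio :
      (L.count x : K) * #(arrangements L) = L.length * #(arrangements (L.erase x)) := by
    exact_mod_cast count_mul_card_arrangements L (List.mem_toFinset.1 hx)
  rw [mul_div_assoc', div_eq_div_iff (hcard _) (hcard _)]
  linear_combination -(∑ w ∈ arrangements (L.erase x), f (x :: w)) * hratio

lemma sum_toFinset_count_mul_eq {K : Type*} [CommRing K] (L : List α) (S : Finset α)
    (H : α → K) (C : K) (hH : ∀ z ∉ S, H z = C) :
    ∑ z ∈ L.toFinset, (L.count z : K) * H z =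
      L.length * C + ∑ s ∈ S, (L.count s : K) * (H s - C) := by
  have hsplit : ∀ z, (L.count z : K) * H z = L.count z * C + L.count z * (H z - C) :=
    fun z => by ring
  rw [sum_congr rfl fun z _ => hsplit z, sum_add_distrib, ← sum_mul, ← Nat.cast_sum,
    List.sum_toFinset_count_eq_length, sum_subset (subset_union_left (s₂ := S)),
    ← sum_subset (subset_union_right (s₁ := L.toFinset))]
  · intro z _ hz
    rw [hH z hz, sub_self, mul_zero]
  · intro z _ hz
    rw [List.count_eq_zero_of_not_mem (by simpa using hz), Nat.cast_zero, zero_mul]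

lemma cast_count_erase {K : Type*} [Ring K] (L : List α) {z : α} (hz : z ∈ L) (a : α) :
    ((L.erase z).count a : K) = L.count a - if z = a then 1 else 0 := by
  split_ifs with h
  · subst h
    rw [List.count_erase_self, Nat.cast_pred (List.count_pos_iff.2 hz)]
  · rw [List.count_erase_of_ne (Ne.symm h), sub_zero]

end Arrangements

lemma expect_add_mul_add {ι K : Type*} [Field K] [CharZero K] {s : Finset ι} (hs : s.Nonempty)
    {f g : ι → K} (hf : 𝔼 i ∈ s, f i = 0) (hg : 𝔼 i ∈ s, g i = 0) (a b : K) :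
    𝔼 i ∈ s, (f i + a) * (g i + b) = 𝔼 i ∈ s, f i * g i + a * b := by
  have hexpand : ∀ i, (f i + a) * (g i + b) = f i * g i + (b * f i + a * g i) + a * b :=
    fun i => by ring
  simp only [hexpand, expect_add_distrib, ← mul_expect, hf, hg, expect_const hs]
  ring

lemma List.count_eq_sum_fin {α : Type*} [DecidableEq α] (b : α) (w : List α) :
    w.count b = ∑ j : Fin w.length, if w[j] = b then 1 else 0 := by
  induction w with
  | nil => simp
  | cons x w ih =>
    simp only [List.count_cons, List.length_cons, Fin.sum_univ_succ, ih, beq_iff_eq]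
    split_ifs <;> simp_all [add_comm]

lemma cnt_cons (a b x : ℕ) (w : List ℕ) :
    cnt a b (x :: w) = (if x = a then w.count b else 0) + cnt a b w := by
  simp only [cnt, card_filter, Fintype.sum_prod_type, List.length_cons, Fin.sum_univ_succ,
    List.get_eq_getElem, Fin.val_zero, Fin.val_succ, List.getElem_cons_zero,
    List.getElem_cons_succ, Fin.succ_lt_succ_iff, Fin.succ_pos, Fin.not_lt_zero, false_and,
    if_false, true_and, zero_add, List.count_eq_sum_fin]
  split_ifs <;> simp_all

def netInv (x y : ℕ) (w : List ℕ) : ℤ := (cnt y x w : ℤ) - cnt x y w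

@[simp]
lemma netInv_nil (x y : ℕ) : netInv x y [] = 0 := by
  simp [netInv, cnt]

lemma netInv_cons (x y z : ℕ) (w : List ℕ) :
    netInv x y (z :: w) =
      netInv x y w + ((if z = y then w.count x else 0) - (if z = x then w.count y else 0) : ℤ) := by
  simp only [netInv, cnt_cons]
  push_cast
  ring

def netInvShift (x y : ℕ) (L : List ℕ) (z : ℕ) : ℝ :=
  (if z = y then (L.count x : ℝ) else 0) - if z = x then (L.count y : ℝ) else 0

lemma netInv_cons_of_perm_erase {x y : ℕ} (hxy : x ≠ y) {L w : List ℕ} {z : ℕ}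
    (hw : w.Perm (L.erase z)) :
    (netInv x y (z :: w) : ℝ) = netInv x y w + netInvShift x y L z := by
  rw [netInv_cons, netInvShift, hw.count_eq, hw.count_eq]
  split_ifs <;> subst_vars <;> simp [List.count_erase_of_ne, hxy, Ne.symm hxy]

section Moments

variable {x y : ℕ}

lemma expect_netInv (hxy : x ≠ y) (L : List ℕ) :
    𝔼 w ∈ arrangements L, (netInv x y w : ℝ) = 0 := by
  induction L using List.induction_on_erase with
  | nil => simp [arrangements_nil]
  | step L hL ih =>
    have hN : (L.length : ℝ) ≠ 0 := by simpa using hL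
    refine (mul_eq_zero.1 ?_).resolve_left hN
    have hcons : ∀ z ∈ L.toFinset,
        𝔼 w ∈ arrangements (L.erase z), (netInv x y (z :: w) : ℝ) = netInvShift x y L z := by
      intro z hz
      rw [expect_congr rfl fun w hw => netInv_cons_of_perm_erase hxy (mem_arrangements.1 hw),
        expect_add_distrib, ih z (List.mem_toFinset.1 hz),
        expect_const (arrangements_nonempty _), zero_add]
    rw [length_mul_expect_arrangements, sum_congr rfl fun z hz => by rw [hcons z hz],
      sum_toFinset_count_mul_eq L {x, y} _ 0 ?_, sum_pair hxy]
    · simp only [netInvShift, if_pos, if_neg hxy, if_neg hxy.symm]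
      ring
    · intro z hz
      simp only [mem_insert, mem_singleton, not_or] at hz
      simp [netInvShift, hz.1, hz.2]

lemma expect_netInv_mul_self (hxy : x ≠ y) (L : List ℕ) :
    𝔼 w ∈ arrangements L, (netInv x y w : ℝ) * netInv x y w =
      L.count x * L.count y * (L.count x + L.count y + 1) / 3 := by
  induction L using List.induction_on_erase with
  | nil => simp [arrangements_nil]
  | step L hL ih =>
    have hN : (L.length : ℝ) ≠ 0 := by simpa using hL
    refine mul_left_cancel₀ hN ?_
    set H : ℕ → ℝ := fun z =>
      (L.count x - if z = x then 1 else 0) * (L.count y - if z = y then 1 else 0) *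
        ((L.count x - if z = x then 1 else 0) + (L.count y - if z = y then 1 else 0) + 1) / 3 +
        netInvShift x y L z * netInvShift x y L z with hH
    have hcons : ∀ z ∈ L.toFinset,
        𝔼 w ∈ arrangements (L.erase z), (netInv x y (z :: w) : ℝ) * netInv x y (z :: w) =
          H z := by
      intro z hz
      have hz := List.mem_toFinset.1 hz
      rw [expect_congr rfl fun w hw => by
          rw [netInv_cons_of_perm_erase hxy (mem_arrangements.1 hw)],
        expect_add_mul_add (arrangements_nonempty _) (expect_netInv hxy _) (expect_netInv hxy _),
        ih z hz, cast_count_erase L hz, cast_count_erase L hz]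
    rw [length_mul_expect_arrangements, sum_congr rfl fun z hz => by rw [hcons z hz],
      sum_toFinset_count_mul_eq L {x, y} H
        (L.count x * L.count y * (L.count x + L.count y + 1) / 3) ?_, sum_pair hxy]
    · simp only [hH, netInvShift, if_pos, if_neg hxy, if_neg hxy.symm]
      ring
    · intro z hz
      simp only [mem_insert, mem_singleton, not_or] at hz
      simp [hH, netInvShift, hz.1, hz.2]

lemma expect_netInv_mul_netInv {z : ℕ} (hxy : x ≠ y) (hyz : y ≠ z) (hxz : x ≠ z)
    (L : List ℕ) :
    𝔼 w ∈ arrangements L, (netInv x y w : ℝ) * netInv y z w =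
      -(L.count x * L.count y * L.count z) / 3 := by
  induction L using List.induction_on_erase with
  | nil => simp [arrangements_nil]
  | step L hL ih =>
    have hN : (L.length : ℝ) ≠ 0 := by simpa using hL
    refine mul_left_cancel₀ hN ?_
    set H : ℕ → ℝ := fun u =>
      -((L.count x - if u = x then 1 else 0) * (L.count y - if u = y then 1 else 0) *
        (L.count z - if u = z then 1 else 0)) / 3 +
        netInvShift x y L u * netInvShift y z L u with hH
    have hcons : ∀ u ∈ L.toFinset,
        𝔼 w ∈ arrangements (L.erase u), (netInv x y (u :: w) : ℝ) * netInv y z (u :: w) =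
          H u := by
      intro u hu
      have hu := List.mem_toFinset.1 hu
      rw [expect_congr rfl fun w hw => by
          rw [netInv_cons_of_perm_erase hxy (mem_arrangements.1 hw),
            netInv_cons_of_perm_erase hyz (mem_arrangements.1 hw)],
        expect_add_mul_add (arrangements_nonempty _) (expect_netInv hxy _) (expect_netInv hyz _),
        ih u hu, cast_count_erase L hu, cast_count_erase L hu, cast_count_erase L hu]
    rw [length_mul_expect_arrangements, sum_congr rfl fun u hu => by rw [hcons u hu],
      sum_toFinset_count_mul_eq L {x, y, z} H (-(L.count x * L.count y * L.count z) / 3) ?_,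
      sum_insert (by simp [hxy, hxz]), sum_pair hyz]
    · simp only [hH, netInvShift, if_pos, if_neg hxy, if_neg hxy.symm, if_neg hyz,
        if_neg hyz.symm, if_neg hxz, if_neg hxz.symm]
      ring
    · intro u hu
      simp only [mem_insert, mem_singleton, not_or] at hu
      simp [hH, netInvShift, hu.1, hu.2.1, hu.2.2]

end Moments

def balancedWord (n : ℕ) : List ℕ :=
  List.replicate n 1 ++ List.replicate n 2 ++ List.replicate n 3

lemma count_balancedWord (n : ℕ) :
    (balancedWord n).count 1 = n ∧ (balancedWord n).count 2 = n ∧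
      (balancedWord n).count 3 = n := by
  simp [balancedWord, List.count_replicate]

lemma E_eq_expect (n : ℕ) (g : List ℕ → ℝ) : E n g = 𝔼 w ∈ arrangements (balancedWord n), g w :=
  (expect_eq_sum_div_card _ _).symm

lemma Cov_eq_expect_mul {n : ℕ} {g h : List ℕ → ℝ} (hg : E n g = 0) (hh : E n h = 0) :
    Cov n g h = 𝔼 w ∈ arrangements (balancedWord n), g w * h w := by
  simp only [Cov, hg, hh, sub_zero, E_eq_expect]

lemma s1_eq_netInv : s1 = netInv 1 2 := rfl

lemma s2_eq_netInv : s2 = netInv 2 3 := rfl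

theorem covariance_and_correlation_general (n : ℕ) :
    Cov n (fun w => (s1 w : ℝ)) (fun w => (s2 w : ℝ)) = -((n : ℝ) ^ 3) / 3 ∧
    Cov n (fun w => (s1 w : ℝ)) (fun w => (s2 w : ℝ)) /
      Real.sqrt (Cov n (fun w => (s1 w : ℝ)) (fun w => (s1 w : ℝ)) *
        Cov n (fun w => (s2 w : ℝ)) (fun w => (s2 w : ℝ))) =
      -(n : ℝ) / (2 * n + 1) := by
  obtain ⟨c1, c2, c3⟩ := count_balancedWord n
  have h1 : E n (fun w => (s1 w : ℝ)) = 0 := by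
    rw [E_eq_expect, s1_eq_netInv, expect_netInv (by norm_num)]
  have h2 : E n (fun w => (s2 w : ℝ)) = 0 := by
    rw [E_eq_expect, s2_eq_netInv, expect_netInv (by norm_num)]
  have cov12 : Cov n (fun w => (s1 w : ℝ)) (fun w => (s2 w : ℝ)) = -((n : ℝ) ^ 3) / 3 := by
    rw [Cov_eq_expect_mul h1 h2, s1_eq_netInv, s2_eq_netInv,
      expect_netInv_mul_netInv (by norm_num) (by norm_num) (by norm_num), c1, c2, c3]
    ring
  have var1 : Cov n (fun w => (s1 w : ℝ)) (fun w => (s1 w : ℝ)) = n ^ 2 * (2 * n + 1) / 3 := by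
    rw [Cov_eq_expect_mul h1 h1, s1_eq_netInv, expect_netInv_mul_self (by norm_num), c1, c2]
    ring
  have var2 : Cov n (fun w => (s2 w : ℝ)) (fun w => (s2 w : ℝ)) = n ^ 2 * (2 * n + 1) / 3 := by
    rw [Cov_eq_expect_mul h2 h2, s2_eq_netInv, expect_netInv_mul_self (by norm_num), c2, c3]
    ring
  refine ⟨cov12, ?_⟩
  rw [cov12, var1, var2, ← sq, Real.sqrt_sq (by positivity)]
  rcases eq_or_ne n 0 with rfl | hn
  · simp
  · field_simp

theorem covariance_and_correlation (n : ℕ) (hn : 1 ≤ n) :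
    Cov n (fun w => (s1 w : ℝ)) (fun w => (s2 w : ℝ)) = -((n : ℝ) ^ 3) / 3 ∧
    Cov n (fun w => (s1 w : ℝ)) (fun w => (s2 w : ℝ)) /
      Real.sqrt (Cov n (fun w => (s1 w : ℝ)) (fun w => (s1 w : ℝ)) *
        Cov n (fun w => (s2 w : ℝ)) (fun w => (s2 w : ℝ))) =
      -(n : ℝ) / (2 * n + 1) :=
  covariance_and_correlation_general n
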